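/- arXiv:2504.14683 — 2 statements merged into one kernel-verified Lean document; each statement's English description precedes it below -/
import Mathlib

section
/- In a bipartite graph where every vertex has degree at least 1, if a subgraph of minimum total edge weight subject to all vertices having degree in [1,t] contains a path a–b–c–d of length three, then removing the middle edge b–c still leaves all degrees at least 1; hence a minimum-weight degree-constrained subgraph with lower bound 1 at every vertex contains no path of length three, and is therefore a disjoint union of star graphs. -/
/-- A minimum-weight degree-constrained subgraph of a bipartite graph with
degree bounds [1,t] at every vertex (edge weights positive) contains no path of length
three `a–b–c–d`. -/
theorem stmt_0 {V : Type*} [Fintype V] [DecidableEq V]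
    (P1 P2 : Finset V) (_hdisj : Disjoint P1 P2) (_hcover : P1 ∪ P2 = Finset.univ)
    (E : Finset (Sym2 V)) (w : Sym2 V → ℝ)
    (hw : ∀ e ∈ E, 0 < w e)
    (hbip : ∀ e ∈ E, ∃ p ∈ P1, ∃ q ∈ P2, e = s(p, q))
    (t : ℕ) (ht : 1 ≤ t)
    (E' : Finset (Sym2 V)) (hE' : E' ⊆ E)
    (hdeg : ∀ v : V, 1 ≤ (E'.filter (fun e => v ∈ e)).card ∧
      (E'.filter (fun e => v ∈ e)).card ≤ t)
    (hmin : ∀ E'' ⊆ E,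
      (∀ v : V, 1 ≤ (E''.filter (fun e => v ∈ e)).card ∧
        (E''.filter (fun e => v ∈ e)).card ≤ t) →
      ∑ e ∈ E', w e ≤ ∑ e ∈ E'', w e) :
    ¬ ∃ a b c d : V, a ≠ b ∧ b ≠ c ∧ c ≠ d ∧ a ≠ c ∧ a ≠ d ∧ b ≠ d ∧
      s(a, b) ∈ E' ∧ s(b, c) ∈ E' ∧ s(c, d) ∈ E' := by
  rintro ⟨a, b, c, d, hab, hbc, hcd, hac, had, hbd, h1, h2, h3⟩
  set E'' := E'.erase s(b, c) with hE''def
  have hne1 : s(a, b) ≠ s(b, c) := by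
    intro h; rcases Sym2.eq_iff.mp h with ⟨rfl, rfl⟩ | ⟨rfl, _⟩ <;> simp_all
  have hne2 : s(c, d) ≠ s(b, c) := by
    intro h; rcases Sym2.eq_iff.mp h with ⟨rfl, rfl⟩ | ⟨_, rfl⟩ <;> simp_all
  have hsub : E'' ⊆ E := (Finset.erase_subset _ _).trans hE'
  have hdeg'' : ∀ v : V, 1 ≤ (E''.filter (fun e => v ∈ e)).card ∧
      (E''.filter (fun e => v ∈ e)).card ≤ t := by
    intro v
    constructor
    · refine Finset.card_pos.mpr ?_
      obtain ⟨e, he⟩ := Finset.card_pos.mp (hdeg v).1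
      rw [Finset.mem_filter] at he
      by_cases hbc' : e = s(b, c)
      · subst hbc'
        rcases Sym2.mem_iff.mp he.2 with rfl | rfl
        · exact ⟨s(a, v), Finset.mem_filter.mpr
            ⟨Finset.mem_erase.mpr ⟨hne1, h1⟩, by simp⟩⟩
        · exact ⟨s(v, d), Finset.mem_filter.mpr
            ⟨Finset.mem_erase.mpr ⟨hne2, h3⟩, by simp⟩⟩
      · exact ⟨e, Finset.mem_filter.mpr ⟨Finset.mem_erase.mpr ⟨hbc', he.1⟩, he.2⟩⟩
    · exact le_trans (Finset.card_le_card (Finset.filter_subset_filter _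
        (Finset.erase_subset _ _))) (hdeg v).2
  have hle := hmin E'' hsub hdeg''
  have hsum : ∑ e ∈ E'', w e = ∑ e ∈ E', w e - w s(b, c) :=
    Finset.sum_erase_eq_sub h2
  have hpos : 0 < w s(b, c) := hw _ (hE' h2)
  rw [hsum] at hle
  linarith
end

section
/- Let C be a cluster with n_r red and n_b ≤ t·n_r blue points, in a graph H₁ that is a disjoint union of stars with each center of degree at most t. Suppose every red point of C has degree exactly t ≥ 2 in H₁ and the number of edges between red and blue points inside C is n₂ = t·n_r − n₁. If additionally the blue points of C include at least n₁ points of degree 1 not among the n₂ internally matched blue points, plus one more blue point of degree 1, then C contains t·n_r blue points all of degree 1, whose total degree t·n_r contradicts any assumption that the blue points of C are incident to at least t·n_r + 1 edges. Hence some red point of C has degree at most t − 1. -/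
/-- degree-counting contradiction: Let `H₁` be a disjoint union of stars
(no path with three edges) on red points `P1` and blue points `P2`, with all degrees in
`[1, t]`, `t ≥ 2`. Let `C` be a `t`-balanced cluster (`n_b ≤ t·n_r`). Suppose every red
point of `C` has degree exactly `t`, the number `n₂` of internal red–blue edges of `C`
equals `t·n_r − n₁`, the blue points of `C` include at least `n₁` points of degree 1 not
adjacent to any red point of `C`, plus one more such blue point of degree 1, and the
blue points of `C` are incident to at least `t·n_r + 1` edges of `H₁`. This situation is
impossible (hence some red point of `C` must have degree at most `t − 1`). -/
theorem stmt_17 {V : Type*} [Fintype V] [DecidableEq V]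
    (G : SimpleGraph V) [DecidableRel G.Adj]
    (P1 P2 : Finset V) (hdisj : Disjoint P1 P2) (hcover : P1 ∪ P2 = Finset.univ)
    (hbip : ∀ p q : V, G.Adj p q → (p ∈ P1 ∧ q ∈ P2) ∨ (p ∈ P2 ∧ q ∈ P1))
    (hstar : ¬ ∃ a b c d : V, a ≠ b ∧ b ≠ c ∧ c ≠ d ∧ a ≠ c ∧ a ≠ d ∧ b ≠ d ∧
      G.Adj a b ∧ G.Adj b c ∧ G.Adj c d)
    (t : ℕ) (ht : 2 ≤ t)
    (hdeg : ∀ v : V, 1 ≤ G.degree v ∧ G.degree v ≤ t)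
    (C : Finset V) (n_r n_b n₁ n₂ : ℕ)
    (hnr : n_r = (C ∩ P1).card) (hnb : n_b = (C ∩ P2).card)
    (hbal : n_b ≤ t * n_r)
    (hred : ∀ p ∈ C ∩ P1, G.degree p = t)
    (hn2 : n₂ = ∑ p ∈ C ∩ P1, ((C ∩ P2).filter (fun q => G.Adj p q)).card)
    (hn12 : n₁ ≤ t * n_r ∧ n₂ = t * n_r - n₁)
    (hsupply : ∃ B : Finset V, B ⊆ C ∩ P2 ∧ n₁ + 1 ≤ B.card ∧
      (∀ q ∈ B, G.degree q = 1) ∧ ∀ q ∈ B, ∀ p ∈ C ∩ P1, ¬ G.Adj p q)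
    (hinc : t * n_r + 1 ≤ ∑ q ∈ C ∩ P2, G.degree q) :
    False := by
  obtain ⟨B, hB, hBcard, hBdeg, hBnoadj⟩ := hsupply
  -- each blue point is adjacent to at most one red point of C
  have key : ∀ p ∈ C ∩ P1, ∀ p' ∈ C ∩ P1, p ≠ p' →
      ∀ q : V, G.Adj p q → ¬ G.Adj p' q := by
    intro p hp p' hp' hpp' q hpq hp'q
    have hpP1 : p ∈ P1 := (Finset.mem_inter.mp hp).2
    have hp'P1 : p' ∈ P1 := (Finset.mem_inter.mp hp').2
    have hqP2 : q ∈ P2 := by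
      rcases hbip p q hpq with ⟨_, h⟩ | ⟨h, _⟩
      · exact h
      · exact absurd hpP1 (Finset.disjoint_right.mp hdisj h)
    -- p has degree t ≥ 2, so it has a neighbor q' ≠ q
    have hdp : G.degree p = t := hred p hp
    have h2 : 2 ≤ (G.neighborFinset p).card := by
      rw [G.card_neighborFinset_eq_degree, hdp]; exact ht
    have hq_mem : q ∈ G.neighborFinset p := by
      rw [SimpleGraph.mem_neighborFinset]; exact hpq
    have : 1 ≤ ((G.neighborFinset p).erase q).card := by
      rw [Finset.card_erase_of_mem hq_mem]; omega
    obtain ⟨q', hq'⟩ := Finset.card_pos.mp (show 0 < ((G.neighborFinset p).erase q).card by omega)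
    have hq'ne : q' ≠ q := (Finset.mem_erase.mp hq').1
    have hpq' : G.Adj p q' :=
      (SimpleGraph.mem_neighborFinset _ _ _).mp (Finset.mem_erase.mp hq').2
    have hq'P2 : q' ∈ P2 := by
      rcases hbip p q' hpq' with ⟨_, h⟩ | ⟨h, _⟩
      · exact h
      · exact absurd hpP1 (Finset.disjoint_right.mp hdisj h)
    apply hstar
    refine ⟨q', p, q, p', ?_, ?_, ?_, hq'ne, ?_, hpp', hpq'.symm, hpq, hp'q.symm⟩
    · exact fun h => Finset.disjoint_left.mp hdisj hpP1 (h ▸ hq'P2)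
    · exact hpq.ne
    · exact fun h => Finset.disjoint_left.mp hdisj hp'P1 (h ▸ hqP2)
    · exact fun h => Finset.disjoint_left.mp hdisj hp'P1 (h ▸ hq'P2)
  set f : V → Finset V := fun p => (C ∩ P2).filter (fun q => G.Adj p q) with hf
  have hdisjf : ∀ p ∈ (C ∩ P1 : Finset V), ∀ p' ∈ (C ∩ P1 : Finset V),
      p ≠ p' → Disjoint (f p) (f p') := by
    intro p hp p' hp' hpp'
    rw [Finset.disjoint_left]
    intro q hq hq'
    exact key p hp p' hp' hpp' q (Finset.mem_filter.mp hq).2 (Finset.mem_filter.mp hq').2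
  set A : Finset V := (C ∩ P1).biUnion f with hA
  have hAcard : A.card = n₂ := by
    rw [hA, Finset.card_biUnion hdisjf, hn2]
  have hAsub : A ⊆ C ∩ P2 := by
    intro q hq
    obtain ⟨p, _, hq⟩ := Finset.mem_biUnion.mp hq
    exact (Finset.mem_filter.mp hq).1
  have hABdisj : Disjoint A B := by
    rw [Finset.disjoint_left]
    intro q hqA hqB
    obtain ⟨p, hp, hq⟩ := Finset.mem_biUnion.mp hqA
    exact hBnoadj q hqB p hp (Finset.mem_filter.mp hq).2
  have hunion : A.card + B.card ≤ (C ∩ P2).card := by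
    rw [← Finset.card_union_of_disjoint hABdisj]
    exact Finset.card_le_card (Finset.union_subset hAsub hB)
  omega
end
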